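/- arXiv:math/0504184 — 4 statements merged into one kernel-verified Lean document; each statement's English description precedes it below -/
import Mathlib

section
/- In a quasi-Hopf algebra $H$, for all $a \in H$ one has $\sum_\nu X_\nu a \otimes Y_\nu\beta S(Z_\nu) = \sum a_{(1)}^{(1)} X_\nu \otimes a_{(1)}^{(2)} Y_\nu \beta S(Z_\nu) S(a_{(2)})$, where $(\Delta\otimes 1)\Delta(a) = \sum a_{(1)}^{(1)}\otimes a_{(1)}^{(2)}\otimes a_{(2)}$. -/
open TensorProduct

noncomputable section

namespace QHA

variable (K : Type*) [Field K] (H : Type*) [Ring H] [Algebra K H]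

abbrev T2 := H ⊗[K] H
abbrev T3 := H ⊗[K] (H ⊗[K] H)
abbrev T4 := H ⊗[K] (H ⊗[K] (H ⊗[K] H))

/-- multiplication `x ⊗ y ↦ x * y`. -/
def mul2 : T2 K H →ₗ[K] H := LinearMap.mul' K H

/-- `Δ ⊗ 1`, re-associated to land in `H ⊗ (H ⊗ H)`. -/
def DL (Δl : H →ₗ[K] T2 K H) : T2 K H →ₗ[K] T3 K H :=
  (TensorProduct.assoc K H H H).toLinearMap ∘ₗ TensorProduct.map Δl LinearMap.id

/-- `1 ⊗ Δ`. -/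
def DR (Δl : H →ₗ[K] T2 K H) : T2 K H →ₗ[K] T3 K H :=
  TensorProduct.map LinearMap.id Δl

/-- embed `x ⊗ y ↦ x ⊗ y ⊗ 1`. -/
def j12 : T2 K H →ₗ[K] T3 K H :=
  TensorProduct.map LinearMap.id ((TensorProduct.mk K H H).flip 1)

/-- embed `x ⊗ y ↦ 1 ⊗ x ⊗ y`. -/
def j23 : T2 K H →ₗ[K] T3 K H := TensorProduct.mk K H (H ⊗[K] H) 1

/-- embed `x ⊗ y ↦ x ⊗ 1 ⊗ y`. -/
def j13two : T2 K H →ₗ[K] T3 K H :=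
  TensorProduct.map LinearMap.id (TensorProduct.mk K H H 1)

/-- `Δ ⊗ 1 ⊗ 1` on three legs. -/
def d12 (Δl : H →ₗ[K] T2 K H) : T3 K H →ₗ[K] T4 K H :=
  (TensorProduct.assoc K H H (H ⊗[K] H)).toLinearMap ∘ₗ TensorProduct.map Δl LinearMap.id

/-- `1 ⊗ Δ ⊗ 1` on three legs. -/
def d23 (Δl : H →ₗ[K] T2 K H) : T3 K H →ₗ[K] T4 K H :=
  TensorProduct.map LinearMap.id (DL K H Δl)

/-- `1 ⊗ 1 ⊗ Δ` on three legs. -/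
def d34 (Δl : H →ₗ[K] T2 K H) : T3 K H →ₗ[K] T4 K H :=
  TensorProduct.map LinearMap.id (TensorProduct.map LinearMap.id Δl)

/-- embed `x ⊗ y ⊗ z ↦ x ⊗ y ⊗ z ⊗ 1`. -/
def j123 : T3 K H →ₗ[K] T4 K H :=
  TensorProduct.map LinearMap.id (TensorProduct.map LinearMap.id ((TensorProduct.mk K H H).flip 1))

/-- embed `x ↦ 1 ⊗ x`. -/
def j234 : T3 K H →ₗ[K] T4 K H := TensorProduct.mk K H (T3 K H) 1

/-- `ε ⊗ 1` on two legs. -/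
def eL (εl : H →ₗ[K] K) : T2 K H →ₗ[K] H :=
  (TensorProduct.lid K H).toLinearMap ∘ₗ TensorProduct.map εl LinearMap.id

/-- `1 ⊗ ε` on two legs. -/
def eR (εl : H →ₗ[K] K) : T2 K H →ₗ[K] H :=
  (TensorProduct.rid K H).toLinearMap ∘ₗ TensorProduct.map LinearMap.id εl

/-- `ε ⊗ 1 ⊗ 1`. -/
def e1 (εl : H →ₗ[K] K) : T3 K H →ₗ[K] T2 K H :=
  (TensorProduct.lid K (T2 K H)).toLinearMap ∘ₗ TensorProduct.map εl LinearMap.id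

/-- `1 ⊗ ε ⊗ 1`. -/
def e2 (εl : H →ₗ[K] K) : T3 K H →ₗ[K] T2 K H :=
  TensorProduct.map LinearMap.id (eL K H εl)

/-- `1 ⊗ 1 ⊗ ε`. -/
def e3 (εl : H →ₗ[K] K) : T3 K H →ₗ[K] T2 K H :=
  TensorProduct.map LinearMap.id (eR K H εl)

/-- the permutation `x ⊗ y ⊗ z ↦ x ⊗ z ⊗ y`. -/
def p132 : T3 K H ≃ₗ[K] T3 K H :=
  TensorProduct.congr (LinearEquiv.refl K H) (TensorProduct.comm K H H)

/-- the permutation `x ⊗ y ⊗ z ↦ y ⊗ x ⊗ z`. -/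
def p213 : T3 K H ≃ₗ[K] T3 K H := TensorProduct.leftComm K H H H

/-- `Φ ↦ Φ_{231}`, i.e. `x ⊗ y ⊗ z ↦ z ⊗ x ⊗ y`. -/
def p231 : T3 K H ≃ₗ[K] T3 K H := (p132 K H).trans (p213 K H)

/-- `Φ ↦ Φ_{312}`, i.e. `x ⊗ y ⊗ z ↦ y ⊗ z ⊗ x`. -/
def p312 : T3 K H ≃ₗ[K] T3 K H := (p213 K H).trans (p132 K H)

/-- total reversal `x ⊗ y ⊗ z ↦ z ⊗ y ⊗ x`. -/
def p321 : T3 K H ≃ₗ[K] T3 K H :=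
  (p132 K H).trans ((TensorProduct.comm K H (H ⊗[K] H)).trans (TensorProduct.assoc K H H H))

/-- A quasi-bialgebra structure on `H`. -/
structure QuasiBialgebra : Type _ where
  Δ : H →ₐ[K] T2 K H
  ε : H →ₐ[K] K
  Φ : (T3 K H)ˣ
  quasiCoassoc : ∀ a : H,
    (Φ : T3 K H) * DR K H Δ.toLinearMap (Δ a) =
      DL K H Δ.toLinearMap (Δ a) * (Φ : T3 K H)
  pentagon :
    d12 K H Δ.toLinearMap (Φ : T3 K H) * d34 K H Δ.toLinearMap (Φ : T3 K H) =
      j123 K H (Φ : T3 K H) * d23 K H Δ.toLinearMap (Φ : T3 K H) * j234 K H (Φ : T3 K H)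
  counit_left : ∀ a : H, eL K H ε.toLinearMap (Δ a) = a
  counit_right : ∀ a : H, eR K H ε.toLinearMap (Δ a) = a
  eps_mid : e2 K H ε.toLinearMap (Φ : T3 K H) = 1

/-- `x ⊗ (y ⊗ z) ↦ S'(x) * α' * y * β * S(z)` (the mixed `v`-expression). -/
def mixPhi (S' S : H →ₗ[K] H) (α' β : H) : T3 K H →ₗ[K] H :=
  mul2 K H ∘ₗ TensorProduct.map S'
    (mul2 K H ∘ₗ TensorProduct.map (LinearMap.mulLeft K α') (LinearMap.mulLeft K β ∘ₗ S))

/-- `x ⊗ (y ⊗ z) ↦ x * β * S(y) * α * z`. -/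
def antPhiInvMap (S : H →ₗ[K] H) (α β : H) : T3 K H →ₗ[K] H :=
  mul2 K H ∘ₗ TensorProduct.map LinearMap.id
    (mul2 K H ∘ₗ TensorProduct.map (LinearMap.mulLeft K β ∘ₗ S) (LinearMap.mulLeft K α))

/-- `(S, α, β)` is a quasi-antipode for the quasi-bialgebra `qb`. -/
structure IsQuasiAntipode (qb : QuasiBialgebra K H) (S : H →ₗ[K] H) (α β : H) : Prop where
  map_one : S 1 = 1
  anti_mul : ∀ a b : H, S (a * b) = S b * S a
  phi : mixPhi K H S S α β (qb.Φ : T3 K H) = 1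
  phi_inv : antPhiInvMap K H S α β ((qb.Φ⁻¹ : (T3 K H)ˣ) : T3 K H) = 1
  antialpha : ∀ a : H,
    mul2 K H (TensorProduct.map S LinearMap.id (qb.Δ a) * (α ⊗ₜ[K] (1 : H))) = qb.ε a • α
  antibeta : ∀ a : H,
    mul2 K H (TensorProduct.map LinearMap.id S (qb.Δ a) * (β ⊗ₜ[K] (1 : H))) = qb.ε a • β

/-- `F` is a twist for `qb`: counit property (invertibility is part of being a unit). -/
structure IsTwist (qb : QuasiBialgebra K H) (F : (T2 K H)ˣ) : Prop where
  eps_left : eL K H qb.ε.toLinearMap (F : T2 K H) = 1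
  eps_right : eR K H qb.ε.toLinearMap (F : T2 K H) = 1

/-- the twisted coassociator `Φ_F`. -/
def twistPhiE (Δl : H →ₗ[K] T2 K H) (Φel : T3 K H) (F : (T2 K H)ˣ) : T3 K H :=
  j12 K H (F : T2 K H) * DL K H Δl (F : T2 K H) * Φel *
    DR K H Δl ((F⁻¹ : (T2 K H)ˣ) : T2 K H) * j23 K H ((F⁻¹ : (T2 K H)ˣ) : T2 K H)

/-- the inverse of the twisted coassociator `Φ_F⁻¹`. -/
def twistPhiInvE (Δl : H →ₗ[K] T2 K H) (Φinvel : T3 K H) (F : (T2 K H)ˣ) : T3 K H :=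
  j23 K H (F : T2 K H) * DR K H Δl (F : T2 K H) * Φinvel *
    DL K H Δl ((F⁻¹ : (T2 K H)ˣ) : T2 K H) * j12 K H ((F⁻¹ : (T2 K H)ˣ) : T2 K H)

/-- `α_F = Σ S(f̄ᵢ) α f̄ⁱ`. -/
def twistAlpha (S : H →ₗ[K] H) (α : H) (F : (T2 K H)ˣ) : H :=
  mul2 K H (TensorProduct.map S LinearMap.id ((F⁻¹ : (T2 K H)ˣ) : T2 K H) * (α ⊗ₜ[K] (1 : H)))

/-- `β_F = Σ fᵢ β S(fⁱ)`. -/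
def twistBeta (S : H →ₗ[K] H) (β : H) (F : (T2 K H)ˣ) : H :=
  mul2 K H (TensorProduct.map LinearMap.id S (F : T2 K H) * (β ⊗ₜ[K] (1 : H)))

/-- the twisted coproduct `Δ_F(a) = F Δ(a) F⁻¹`, as a linear map. -/
def twistDelta (Δl : H →ₗ[K] T2 K H) (F : (T2 K H)ˣ) : H →ₗ[K] T2 K H :=
  LinearMap.mulLeft K (F : T2 K H) ∘ₗ
    LinearMap.mulRight K ((F⁻¹ : (T2 K H)ˣ) : T2 K H) ∘ₗ Δl

/-- `x ⊗ y ↦ x * α * y`. -/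
def mulMid (α : H) : T2 K H →ₗ[K] H :=
  mul2 K H ∘ₗ TensorProduct.map (LinearMap.mulRight K α) LinearMap.id

/-- `a ⊗ b ⊗ c ⊗ d ↦ (S(b) α c) ⊗ (S(a) α d)`, the `γ` pairing. -/
def gammaMap (S : H →ₗ[K] H) (α : H) : T4 K H →ₗ[K] T2 K H :=
  TensorProduct.map (mulMid K H α) (mulMid K H α) ∘ₗ
    (TensorProduct.assoc K H H (T2 K H)).symm.toLinearMap ∘ₗ
    TensorProduct.map LinearMap.id (TensorProduct.leftComm K H H H).toLinearMap ∘ₗ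
    (TensorProduct.leftComm K H H (T2 K H)).toLinearMap ∘ₗ
    TensorProduct.map S (TensorProduct.map S (LinearMap.id : T2 K H →ₗ[K] T2 K H))

/-- the Drinfeld element `γ = Σ S(Bᵢ) α Cᵢ ⊗ S(Aᵢ) α Dᵢ`
with `Σ Aᵢ⊗Bᵢ⊗Cᵢ⊗Dᵢ = (Φ⁻¹ ⊗ 1)·(Δ⊗1⊗1)Φ`. -/
def gammaEl (Δl : H →ₗ[K] T2 K H) (Φel Φinvel : T3 K H) (S : H →ₗ[K] H) (α : H) : T2 K H :=
  gammaMap K H S α (j123 K H Φinvel * d12 K H Δl Φel)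

/-- `y ⊗ z ↦ y * β * S(z)`. -/
def gBeta (S : H →ₗ[K] H) (β : H) : T2 K H →ₗ[K] H :=
  mul2 K H ∘ₗ TensorProduct.map LinearMap.id (LinearMap.mulLeft K β ∘ₗ S)

/-- the canonical Drinfeld twist expression
`F_δ = Σ (S⊗S)Δᵀ(X_ν) · γ · Δ(Y_ν β S(Z_ν))`. -/
def drinfeldExpr (Δl : H →ₗ[K] T2 K H) (Φel Φinvel : T3 K H) (S : H →ₗ[K] H) (α β : H) :
    T2 K H :=
  LinearMap.mul' K (T2 K H)
    (TensorProduct.map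
      (TensorProduct.map S S ∘ₗ (TensorProduct.comm K H H).toLinearMap ∘ₗ Δl)
      (LinearMap.mulLeft K (gammaEl K H Δl Φel Φinvel S α) ∘ₗ Δl ∘ₗ gBeta K H S β)
      Φel)

/-- `a ⊗ b ⊗ c ⊗ d ↦ (a β S(d)) ⊗ (b β S(c))`, the `γ̄` pairing. -/
def gammaBarMap (S : H →ₗ[K] H) (β : H) : T4 K H →ₗ[K] T2 K H :=
  TensorProduct.map (mulMid K H β) (mulMid K H β) ∘ₗ
    (TensorProduct.assoc K H H (T2 K H)).symm.toLinearMap ∘ₗ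
    TensorProduct.map LinearMap.id (TensorProduct.leftComm K H H H).toLinearMap ∘ₗ
    TensorProduct.map LinearMap.id
      (TensorProduct.map LinearMap.id (TensorProduct.comm K H H).toLinearMap) ∘ₗ
    TensorProduct.map LinearMap.id
      (TensorProduct.map LinearMap.id (TensorProduct.map S S))

/-- the element `γ̄ = Σ Āᵢ β S(D̄ᵢ) ⊗ B̄ᵢ β S(C̄ᵢ)`
with `Σ Āᵢ⊗B̄ᵢ⊗C̄ᵢ⊗D̄ᵢ = (Δ⊗1⊗1)Φ⁻¹·(Φ⊗1)`. -/
def gammaBarEl (Δl : H →ₗ[K] T2 K H) (Φel Φinvel : T3 K H) (S : H →ₗ[K] H) (β : H) :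
    T2 K H :=
  gammaBarMap K H S β (d12 K H Δl Φinvel * j123 K H Φel)

/-- the canonical inverse Drinfeld twist expression
`F_δ⁻¹ = Σ Δ(S(X_ν) α Y_ν) · γ̄ · (S⊗S)Δᵀ(Z_ν)`. -/
def drinfeldInvExpr (Δl : H →ₗ[K] T2 K H) (Φel Φinvel : T3 K H) (S : H →ₗ[K] H) (α β : H) :
    T2 K H :=
  LinearMap.mul' K (T2 K H)
    (TensorProduct.map
      (LinearMap.mulRight K (gammaBarEl K H Δl Φel Φinvel S β) ∘ₗ Δl ∘ₗ
        (mul2 K H ∘ₗ TensorProduct.map (LinearMap.mulRight K α ∘ₗ S) LinearMap.id))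
      (TensorProduct.map S S ∘ₗ (TensorProduct.comm K H H).toLinearMap ∘ₗ Δl)
      ((TensorProduct.assoc K H H H).symm.toLinearMap Φel))

/-- the unit `Fᵀ` obtained by flipping a unit of `H ⊗ H`. -/
def unitComm (u : (T2 K H)ˣ) : (T2 K H)ˣ where
  val := Algebra.TensorProduct.comm K H H (u : T2 K H)
  inv := Algebra.TensorProduct.comm K H H ((u⁻¹ : (T2 K H)ˣ) : T2 K H)
  val_inv := by rw [← map_mul, Units.mul_inv, map_one]
  inv_val := by rw [← map_mul, Units.inv_mul, map_one]

/-- `R` is a quasi-triangular `R`-matrix for `qb`. -/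
structure IsRMatrix (qb : QuasiBialgebra K H) (R : (T2 K H)ˣ) : Prop where
  intertwine : ∀ a : H,
    (TensorProduct.comm K H H) (qb.Δ a) * (R : T2 K H) = (R : T2 K H) * qb.Δ a
  hexagon1 :
    DL K H qb.Δ.toLinearMap (R : T2 K H) =
      p231 K H ((qb.Φ⁻¹ : (T3 K H)ˣ) : T3 K H) * j13two K H (R : T2 K H) *
        p132 K H (qb.Φ : T3 K H) * j23 K H (R : T2 K H) *
        ((qb.Φ⁻¹ : (T3 K H)ˣ) : T3 K H)
  hexagon2 :
    DR K H qb.Δ.toLinearMap (R : T2 K H) =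
      p312 K H (qb.Φ : T3 K H) * j13two K H (R : T2 K H) *
        p213 K H ((qb.Φ⁻¹ : (T3 K H)ˣ) : T3 K H) * j12 K H (R : T2 K H) *
        (qb.Φ : T3 K H)

/-- the defining property of the (Drinfeld–Reshetikhin type) `u`-operator
associated with an `R`-matrix `Q`. -/
def uProp (S Sinv : H →ₗ[K] H) (α β : H) (Q : (T2 K H)ˣ) (u : Hˣ) : Prop :=
  (∀ a : H, S (S a) = (u : H) * a * ((u⁻¹ : Hˣ) : H)) ∧
  ((u : H) * Sinv α = twistAlpha K H S α Q) ∧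
  (twistBeta K H S β Q * (u : H) = Sinv β)

/-- the explicit formula `u = Σ S(Y_ν β S(Z_ν)) αQ X_ν`. -/
def uExpr (Φel : T3 K H) (S : H →ₗ[K] H) (αQ β : H) : H :=
  mul2 K H (TensorProduct.map (LinearMap.mulRight K αQ ∘ₗ S ∘ₗ gBeta K H S β)
    LinearMap.id ((TensorProduct.comm K H (H ⊗[K] H)) Φel))

end QHA

namespace QHA

/-- `Σ X_ν a ⊗ Y_ν β S(Z_ν) = Σ a₁⁽¹⁾X_ν ⊗ a₁⁽²⁾Y_ν β S(Z_ν) S(a₂)`. -/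
theorem stmt2 {K : Type*} [Field K] {H : Type*} [Ring H] [Algebra K H]
    (qb : QuasiBialgebra K H) (S : H →ₗ[K] H) (α β : H)
    (h : IsQuasiAntipode K H qb S α β) (a : H) :
    TensorProduct.map LinearMap.id (gBeta K H S β)
        ((qb.Φ : T3 K H) * (a ⊗ₜ[K] ((1 : H) ⊗ₜ[K] (1 : H)))) =
      TensorProduct.map LinearMap.id (gBeta K H S β)
        (DL K H qb.Δ.toLinearMap (qb.Δ a) * (qb.Φ : T3 K H)) := by
  have hA : ∀ (y z : H) (d : T2 K H),
      gBeta K H S β ((y ⊗ₜ[K] z) * d) =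
      y * (mul2 K H (TensorProduct.map LinearMap.id S d * (β ⊗ₜ[K] (1:H))) * S z) := by
    intro y z d
    induction d using TensorProduct.induction_on with
    | zero => simp [gBeta, mul2]
    | tmul d1 d2 =>
        simp [gBeta, mul2, Algebra.TensorProduct.tmul_mul_tmul, h.anti_mul, mul_assoc]
    | add u v hu hv => simp only [mul_add, add_mul, map_add, hu, hv]
  have hB : ∀ (x y z : H) (c : T2 K H),
      TensorProduct.map LinearMap.id (gBeta K H S β)
        ((x ⊗ₜ[K] (y ⊗ₜ[K] z)) * TensorProduct.map LinearMap.id qb.Δ.toLinearMap c) =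
      (x * eR K H qb.ε.toLinearMap c) ⊗ₜ[K] (y * (β * S z)) := by
    intro x y z c
    induction c using TensorProduct.induction_on with
    | zero => simp
    | tmul c1 c2 =>
        have hc := hA y z (qb.Δ.toLinearMap c2)
        rw [show qb.Δ.toLinearMap c2 = qb.Δ c2 from rfl, h.antibeta c2] at hc
        simp only [TensorProduct.map_tmul, LinearMap.id_coe, id_eq,
          Algebra.TensorProduct.tmul_mul_tmul, hc, eR, LinearMap.coe_comp,
          Function.comp_apply, LinearEquiv.coe_coe, TensorProduct.rid_tmul,
          smul_mul_assoc, mul_smul_comm, TensorProduct.tmul_smul,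
          TensorProduct.smul_tmul']
        rw [show qb.Δ.toLinearMap c2 = qb.Δ c2 from rfl, hc,
          show qb.ε.toLinearMap c2 = qb.ε c2 from rfl]
        simp [smul_mul_assoc, mul_smul_comm, TensorProduct.smul_tmul',
          TensorProduct.tmul_smul]
    | add u v hu hv =>
        simp only [map_add, mul_add, add_mul, TensorProduct.add_tmul, hu, hv]
  rw [← qb.quasiCoassoc a]
  have key : ∀ t : T3 K H,
      TensorProduct.map LinearMap.id (gBeta K H S β)
        (t * (a ⊗ₜ[K] ((1 : H) ⊗ₜ[K] (1 : H)))) =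
      TensorProduct.map LinearMap.id (gBeta K H S β)
        (t * DR K H qb.Δ.toLinearMap (qb.Δ a)) := by
    intro t
    induction t using TensorProduct.induction_on with
    | zero => simp
    | tmul x p =>
        induction p using TensorProduct.induction_on with
        | zero => simp
        | tmul y z =>
            rw [show DR K H qb.Δ.toLinearMap (qb.Δ a)
                  = TensorProduct.map LinearMap.id qb.Δ.toLinearMap (qb.Δ a) from rfl,
              hB x y z (qb.Δ a), qb.counit_right]
            simp [Algebra.TensorProduct.tmul_mul_tmul, gBeta, mul2, mul_assoc]
        | add u v hu hv =>
            simp only [TensorProduct.tmul_add, add_mul, map_add, hu, hv]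
    | add u v hu hv => simp only [add_mul, map_add, hu, hv]
  exact key _


end QHA
end
end

section
/- Let $H$ be a quasi-Hopf algebra with two quasi-antipodes $(S,\alpha,\beta)$ and $(\tilde S,\tilde\alpha,\tilde\beta)$, and let $v = \sum \tilde S(X_\nu)\tilde\alpha Y_\nu\beta S(Z_\nu)$ be the unique relating element. Then $v$ is invariant under twisting: for any twist $F \in H\otimes H$, the element $v_F = \sum \tilde S(X_\nu^F)\tilde\alpha_F Y_\nu^F\beta_F S(Z_\nu^F)$ computed from the twisted structure (with $\Phi_F = \sum X_\nu^F\otimes Y_\nu^F\otimes Z_\nu^F$, $\tilde\alpha_F = \sum\tilde S(\bar f_i)\tilde\alpha\bar f^i$, $\beta_F = \sum f_i\beta S(f^i)$) satisfies $v_F = v$. -/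
open TensorProduct

noncomputable section

namespace QHA

section Aux

set_option maxHeartbeats 1000000
set_option synthInstance.maxHeartbeats 200000

variable (K : Type*) [Field K] (H : Type*) [Ring H] [Algebra K H]

/-- `x ⊗ y ↦ S'(x) * (c * y)`. -/
def Lmap (S' : H →ₗ[K] H) (c : H) : T2 K H →ₗ[K] H :=
  mul2 K H ∘ₗ TensorProduct.map S' (LinearMap.mulLeft K c)

/-- `x ⊗ y ↦ x * c * S(y)`. -/
def Rmap (S : H →ₗ[K] H) (c : H) : T2 K H →ₗ[K] H :=
  mul2 K H ∘ₗ TensorProduct.map (LinearMap.mulRight K c) S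

@[simp] lemma Lmap_tmul (S' : H →ₗ[K] H) (c x y : H) :
    Lmap K H S' c (x ⊗ₜ[K] y) = S' x * (c * y) := by
  simp [Lmap, mul2, mul_assoc]

@[simp] lemma Rmap_tmul (S : H →ₗ[K] H) (c x y : H) :
    Rmap K H S c (x ⊗ₜ[K] y) = x * c * S y := by
  simp [Rmap, mul2]

@[simp] lemma mixPhi_tmul (S' S : H →ₗ[K] H) (c b x y z : H) :
    mixPhi K H S' S c b (x ⊗ₜ[K] (y ⊗ₜ[K] z)) = S' x * (c * y * (b * S z)) := by
  simp [mixPhi, mul2]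

lemma Lmap_conv (S' : H →ₗ[K] H) (c : H) (t : T2 K H) :
    mul2 K H (TensorProduct.map S' LinearMap.id t * (c ⊗ₜ[K] (1 : H))) =
      Lmap K H S' c t := by
  induction t using TensorProduct.induction_on with
  | zero => simp
  | tmul x y => simp [mul2, Algebra.TensorProduct.tmul_mul_tmul, mul_assoc]
  | add u v hu hv => simp [add_mul, hu, hv]

lemma Rmap_conv (S : H →ₗ[K] H) (c : H) (t : T2 K H) :
    mul2 K H (TensorProduct.map LinearMap.id S t * (c ⊗ₜ[K] (1 : H))) =
      Rmap K H S c t := by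
  induction t using TensorProduct.induction_on with
  | zero => simp
  | tmul x y => simp [mul2, Algebra.TensorProduct.tmul_mul_tmul, mul_assoc]
  | add u v hu hv => simp [add_mul, hu, hv]

lemma Lmap_mul_tmul (S' : H →ₗ[K] H) (hS' : ∀ a b : H, S' (a * b) = S' b * S' a)
    (c : H) (u : T2 K H) (x y : H) :
    Lmap K H S' c (u * (x ⊗ₜ[K] y)) = S' x * (Lmap K H S' c u * y) := by
  induction u using TensorProduct.induction_on with
  | zero => simp
  | tmul p q => simp [Algebra.TensorProduct.tmul_mul_tmul, hS', mul_assoc]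
  | add u v hu hv => simp [add_mul, mul_add, hu, hv]

lemma Lmap_mul (S' : H →ₗ[K] H) (hS' : ∀ a b : H, S' (a * b) = S' b * S' a)
    (c : H) (u v : T2 K H) :
    Lmap K H S' c (u * v) = Lmap K H S' (Lmap K H S' c u) v := by
  induction v using TensorProduct.induction_on with
  | zero => simp
  | tmul x y => rw [Lmap_mul_tmul K H S' hS' c u x y, Lmap_tmul]
  | add v w hv hw => simp [mul_add, hv, hw]

lemma Rmap_tmul_mul (S : H →ₗ[K] H) (hS : ∀ a b : H, S (a * b) = S b * S a)
    (c : H) (v : T2 K H) (x y : H) :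
    Rmap K H S c ((x ⊗ₜ[K] y) * v) = x * (Rmap K H S c v * S y) := by
  induction v using TensorProduct.induction_on with
  | zero => simp
  | tmul p q => simp [Algebra.TensorProduct.tmul_mul_tmul, hS, mul_assoc]
  | add u v hu hv => simp [mul_add, add_mul, hu, hv]

lemma Rmap_mul (S : H →ₗ[K] H) (hS : ∀ a b : H, S (a * b) = S b * S a)
    (c : H) (u v : T2 K H) :
    Rmap K H S c (u * v) = Rmap K H S (Rmap K H S c v) u := by
  induction u using TensorProduct.induction_on with
  | zero => simp
  | tmul x y => rw [Rmap_tmul_mul K H S hS c v x y, Rmap_tmul, mul_assoc]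
  | add u w hu hw => simp [add_mul, hu, hw]

lemma Lmap_one (S' : H →ₗ[K] H) (h1 : S' 1 = 1) (c : H) :
    Lmap K H S' c 1 = c := by
  rw [Algebra.TensorProduct.one_def, Lmap_tmul, h1, one_mul, mul_one]

lemma Rmap_one (S : H →ₗ[K] H) (h1 : S 1 = 1) (c : H) :
    Rmap K H S c 1 = c := by
  rw [Algebra.TensorProduct.one_def, Rmap_tmul, h1, mul_one, one_mul]

@[simp] lemma eR_tmul (εl : H →ₗ[K] K) (x y : H) :
    eR K H εl (x ⊗ₜ[K] y) = εl y • x := by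
  simp [eR]

@[simp] lemma eL_tmul (εl : H →ₗ[K] K) (x y : H) :
    eL K H εl (x ⊗ₜ[K] y) = εl x • y := by
  simp [eL]

lemma eR_mul (εl : H →ₗ[K] K) (hε : ∀ a b : H, εl (a * b) = εl a * εl b)
    (u v : T2 K H) :
    eR K H εl (u * v) = eR K H εl u * eR K H εl v := by
  induction u using TensorProduct.induction_on with
  | zero => simp
  | add u w hu hw => simp [add_mul, hu, hw]
  | tmul x y =>
    induction v using TensorProduct.induction_on with
    | zero => simp
    | add v w hv hw => simp [mul_add, hv, hw]
    | tmul p q =>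
      simp only [Algebra.TensorProduct.tmul_mul_tmul, eR_tmul, hε, mul_smul,
        smul_mul_assoc, mul_smul_comm]
      rw [smul_comm]

lemma eR_one (εl : H →ₗ[K] K) (h1 : εl 1 = 1) : eR K H εl 1 = 1 := by
  rw [Algebra.TensorProduct.one_def, eR_tmul, h1, one_smul]

lemma j12_absorb (S' S : H →ₗ[K] H) (hS' : ∀ a b : H, S' (a * b) = S' b * S' a)
    (c b : H) (w : T2 K H) (t : T3 K H) :
    mixPhi K H S' S c b (j12 K H w * t) =
      mixPhi K H S' S (Lmap K H S' c w) b t := by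
  induction t using TensorProduct.induction_on with
  | zero => simp
  | add u v hu hv => simp [mul_add, hu, hv]
  | tmul x s =>
    induction s using TensorProduct.induction_on with
    | zero => simp
    | add p q hp hq => simp [TensorProduct.tmul_add, mul_add, hp, hq]
    | tmul y z =>
      induction w using TensorProduct.induction_on with
      | zero => simp
      | add w1 w2 h1 h2 =>
        simp only [map_add, add_mul]
        rw [h1, h2, mixPhi_tmul, mixPhi_tmul, mixPhi_tmul]
        simp [add_mul, mul_add]
      | tmul f f' =>
        simp [j12, Algebra.TensorProduct.tmul_mul_tmul, hS', mul_assoc]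

lemma j23_absorb (S' S : H →ₗ[K] H) (hS : ∀ a b : H, S (a * b) = S b * S a)
    (c b : H) (w : T2 K H) (t : T3 K H) :
    mixPhi K H S' S c b (t * j23 K H w) =
      mixPhi K H S' S c (Rmap K H S b w) t := by
  induction t using TensorProduct.induction_on with
  | zero => simp
  | add u v hu hv => simp [add_mul, hu, hv]
  | tmul x s =>
    induction s using TensorProduct.induction_on with
    | zero => simp
    | add p q hp hq => simp [TensorProduct.tmul_add, add_mul, hp, hq]
    | tmul y z =>
      induction w using TensorProduct.induction_on with
      | zero => simp
      | add w1 w2 h1 h2 =>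
        simp only [map_add, mul_add]
        rw [h1, h2, mixPhi_tmul, mixPhi_tmul, mixPhi_tmul]
        simp [add_mul, mul_add]
      | tmul p q =>
        simp [j23, Algebra.TensorProduct.tmul_mul_tmul, hS, mul_assoc]

lemma aux_assoc (S' S : H →ₗ[K] H) (hS' : ∀ a b : H, S' (a * b) = S' b * S' a)
    (hS : ∀ a b : H, S (a * b) = S b * S a)
    (c b : H) (d : T2 K H) (g' x y z : H) :
    mixPhi K H S' S c b
        ((TensorProduct.assoc K H H H) (d ⊗ₜ[K] g') * (x ⊗ₜ[K] (y ⊗ₜ[K] z))) =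
      S' x * (Lmap K H S' c d * (y * (b * (S z * S g')))) := by
  induction d using TensorProduct.induction_on with
  | zero => simp
  | add u v hu hv => simp [TensorProduct.add_tmul, add_mul, mul_add, hu, hv]
  | tmul p q =>
    simp [TensorProduct.assoc_tmul, Algebra.TensorProduct.tmul_mul_tmul, hS', hS,
      mul_assoc]

lemma aux_DR (S' S : H →ₗ[K] H) (hS : ∀ a b : H, S (a * b) = S b * S a)
    (c b : H) (d : T2 K H) (x' y z : H) :
    mixPhi K H S' S c b (x' ⊗ₜ[K] ((y ⊗ₜ[K] z) * d)) =
      S' x' * (c * y * (Rmap K H S b d * S z)) := by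
  induction d using TensorProduct.induction_on with
  | zero => simp
  | add u v hu hv => simp [TensorProduct.tmul_add, mul_add, add_mul, hu, hv]
  | tmul u v =>
    simp [Algebra.TensorProduct.tmul_mul_tmul, hS, mul_assoc]

lemma DL_absorb (S' S : H →ₗ[K] H) (hS' : ∀ a b : H, S' (a * b) = S' b * S' a)
    (hS : ∀ a b : H, S (a * b) = S b * S a)
    (Δl : H →ₗ[K] T2 K H) (εl : H →ₗ[K] K)
    (c b : H) (hα : ∀ a : H, Lmap K H S' c (Δl a) = εl a • c)
    (g : T2 K H) (t : T3 K H) :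
    mixPhi K H S' S c b (DL K H Δl g * t) =
      mixPhi K H S' S c b (j23 K H ((1 : H) ⊗ₜ[K] (eL K H εl g)) * t) := by
  induction t using TensorProduct.induction_on with
  | zero => simp
  | add u v hu hv => simp [mul_add, hu, hv]
  | tmul x s =>
    induction s using TensorProduct.induction_on with
    | zero => simp
    | add p q hp hq => simp [TensorProduct.tmul_add, mul_add, hp, hq]
    | tmul y z =>
      induction g using TensorProduct.induction_on with
      | zero => simp
      | add g1 g2 h1 h2 =>
        simp only [map_add, TensorProduct.tmul_add, add_mul, h1, h2]
      | tmul g0 g' =>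
        have hDL : DL K H Δl (g0 ⊗ₜ[K] g') =
            (TensorProduct.assoc K H H H) ((Δl g0) ⊗ₜ[K] g') := by
          simp [DL]
        rw [hDL, aux_assoc K H S' S hS' hS c b (Δl g0) g' x y z, hα g0]
        simp [j23, Algebra.TensorProduct.tmul_mul_tmul, TensorProduct.tmul_smul,
          hS, mul_assoc, mul_smul_comm, smul_mul_assoc]

lemma DR_absorb (S' S : H →ₗ[K] H) (hS' : ∀ a b : H, S' (a * b) = S' b * S' a)
    (hS : ∀ a b : H, S (a * b) = S b * S a)
    (Δl : H →ₗ[K] T2 K H) (εl : H →ₗ[K] K)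
    (c b : H) (hβ : ∀ a : H, Rmap K H S b (Δl a) = εl a • b)
    (g : T2 K H) (t : T3 K H) :
    mixPhi K H S' S c b (t * DR K H Δl g) =
      mixPhi K H S' S c b (t * j12 K H ((eR K H εl g) ⊗ₜ[K] (1 : H))) := by
  induction t using TensorProduct.induction_on with
  | zero => simp
  | add u v hu hv => simp [add_mul, hu, hv]
  | tmul x s =>
    induction s using TensorProduct.induction_on with
    | zero => simp
    | add p q hp hq => simp [TensorProduct.tmul_add, add_mul, hp, hq]
    | tmul y z =>
      induction g using TensorProduct.induction_on with
      | zero => simp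
      | add g1 g2 h1 h2 =>
        simp only [map_add, TensorProduct.add_tmul, mul_add, h1, h2]
      | tmul gb g' =>
        have hDR : (x ⊗ₜ[K] (y ⊗ₜ[K] z)) * DR K H Δl (gb ⊗ₜ[K] g') =
            (x * gb) ⊗ₜ[K] ((y ⊗ₜ[K] z) * Δl g') := by
          simp [DR, Algebra.TensorProduct.tmul_mul_tmul]
        rw [hDR, aux_DR K H S' S hS c b (Δl g') (x * gb) y z, hβ g']
        simp [j12, Algebra.TensorProduct.tmul_mul_tmul, TensorProduct.smul_tmul',
          hS', mul_assoc, mul_smul_comm, smul_mul_assoc]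

end Aux


/-- universality of `v`: the element `v` relating two quasi-antipodes is
invariant under twisting, i.e. `v_F = v` for any twist `F`. -/
theorem stmt9 {K : Type*} [Field K] {H : Type*} [Ring H] [Algebra K H]
    (qb : QuasiBialgebra K H) (S S' : H →ₗ[K] H) (α β α' β' : H)
    (h : IsQuasiAntipode K H qb S α β) (h' : IsQuasiAntipode K H qb S' α' β')
    (F : (T2 K H)ˣ) (hF : IsTwist K H qb F) :
    mixPhi K H S' S (twistAlpha K H S' α' F) (twistBeta K H S β F)
        (twistPhiE K H qb.Δ.toLinearMap (qb.Φ : T3 K H) F) =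
      mixPhi K H S' S α' β (qb.Φ : T3 K H) := by
  have hS := h.anti_mul
  have hS' := h'.anti_mul
  have hα' : ∀ a : H, Lmap K H S' α' (qb.Δ.toLinearMap a) = qb.ε.toLinearMap a • α' := by
    intro a
    rw [← Lmap_conv]
    exact h'.antialpha a
  have hβ : ∀ a : H, Rmap K H S β (qb.Δ.toLinearMap a) = qb.ε.toLinearMap a • β := by
    intro a
    rw [← Rmap_conv]
    exact h.antibeta a
  have htA : twistAlpha K H S' α' F =
      Lmap K H S' α' ((F⁻¹ : (T2 K H)ˣ) : T2 K H) := Lmap_conv K H S' α' _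
  have htB : twistBeta K H S β F = Rmap K H S β (F : T2 K H) := Rmap_conv K H S β _
  have hεmul : ∀ a b : H, qb.ε.toLinearMap (a * b) =
      qb.ε.toLinearMap a * qb.ε.toLinearMap b := fun a b => map_mul qb.ε a b
  have heR : eR K H qb.ε.toLinearMap ((F⁻¹ : (T2 K H)ˣ) : T2 K H) = 1 := by
    have h1 : eR K H qb.ε.toLinearMap (((F⁻¹ : (T2 K H)ˣ) : T2 K H) * (F : T2 K H)) = 1 := by
      rw [Units.inv_mul]
      exact eR_one K H qb.ε.toLinearMap (map_one qb.ε)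
    rw [eR_mul K H qb.ε.toLinearMap hεmul, hF.eps_right, mul_one] at h1
    exact h1
  have hb : Rmap K H S (Rmap K H S β (F : T2 K H)) ((F⁻¹ : (T2 K H)ˣ) : T2 K H) = β := by
    rw [← Rmap_mul K H S hS β, Units.inv_mul, Rmap_one K H S h.map_one]
  have ha : Lmap K H S' (Lmap K H S' α' ((F⁻¹ : (T2 K H)ˣ) : T2 K H)) (F : T2 K H) = α' := by
    rw [← Lmap_mul K H S' hS' α', Units.inv_mul, Lmap_one K H S' h'.map_one]
  have hj12one : j12 K H ((1 : H) ⊗ₜ[K] (1 : H)) = 1 := by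
    simp [j12, Algebra.TensorProduct.one_def]
  have hj23one : j23 K H ((1 : H) ⊗ₜ[K] (1 : H)) = 1 := by
    simp [j23, Algebra.TensorProduct.one_def]
  rw [htA, htB, twistPhiE]
  rw [j23_absorb K H S' S hS, hb]
  rw [DR_absorb K H S' S hS' hS qb.Δ.toLinearMap qb.ε.toLinearMap _ β hβ]
  rw [heR, hj12one, mul_one]
  rw [mul_assoc]
  rw [j12_absorb K H S' S hS', ha]
  rw [DL_absorb K H S' S hS' hS qb.Δ.toLinearMap qb.ε.toLinearMap α' β hα']
  rw [hF.eps_left, hj23one, one_mul]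

end QHA
end
end

section
/- Let $H$ be a quasi-triangular quasi-Hopf algebra with $R$-matrix $\mathcal R = \sum e_i\otimes e^i$, inverse $\mathcal R^{-1} = \sum\bar e_i\otimes\bar e^i$, $\tilde{\mathcal R} = (\mathcal R^T)^{-1}$, and let $u$ be the Drinfeld–Reshetikhin operator (satisfying $S^2(a)=uau^{-1}$, $uS^{-1}(\alpha)=\alpha_{\mathcal R}$, $\beta_{\mathcal R}u = S^{-1}(\beta)$). Then $\beta_{\tilde{\mathcal R}} := \sum\bar e^i\beta S(\bar e_i) = S(u)S(\beta)$ and $\alpha_{\tilde{\mathcal R}} := \sum S(e^i)\alpha e_i = S(\alpha)S(u^{-1})$. -/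
open TensorProduct

noncomputable section

namespace QHA

/-- with `R̃ = (Rᵀ)⁻¹`, one has
`β_{R̃} = S(u)S(β)` and `α_{R̃} = S(α)S(u⁻¹)`. -/
theorem stmt15 {K : Type*} [Field K] {H : Type*} [Ring H] [Algebra K H]
    (qb : QuasiBialgebra K H) (S Sinv : H →ₗ[K] H) (α β : H)
    (h : IsQuasiAntipode K H qb S α β)
    (hS1 : ∀ a : H, Sinv (S a) = a) (hS2 : ∀ a : H, S (Sinv a) = a)
    (R : (T2 K H)ˣ) (hR : IsRMatrix K H qb R)
    (u : Hˣ) (hu : uProp K H S Sinv α β R u) :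
    twistBeta K H S β ((unitComm K H R)⁻¹) = S (u : H) * S β ∧
    twistAlpha K H S α ((unitComm K H R)⁻¹) = S α * S ((u⁻¹ : Hˣ) : H) := by
  obtain ⟨hSS, ha, hb⟩ := hu
  have hRR : ((R⁻¹ : (T2 K H)ˣ) : T2 K H) * (R : T2 K H) = 1 := R.inv_mul
  have hSSu : S (S (u : H)) = (u : H) := by
    rw [hSS]; exact Units.mul_inv_cancel_right _ _
  have hSSui : S (S ((u⁻¹ : Hˣ) : H)) = ((u⁻¹ : Hˣ) : H) := by
    rw [hSS, mul_assoc]; simp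
  set b : H := twistBeta K H S β R with hbdef
  have hub : (u : H) * b = S β := by
    have h1 : S (S (b * (u : H))) = S β := by rw [hb, hS2]
    rw [hSS, ← mul_assoc, Units.mul_inv_cancel_right] at h1
    exact h1
  set a' : H := twistAlpha K H S α R with hadef
  have hau : S α * (u : H) = a' := by
    have h1 : S (S ((u : H) * Sinv α)) = (u : H) * S α := by
      rw [h.anti_mul, hS2, h.anti_mul, hSSu]
    rw [ha, hSS] at h1
    have h2 : S α = a' * ((u⁻¹ : Hˣ) : H) := by
      have := congrArg (fun z => ((u⁻¹ : Hˣ) : H) * z) h1.symm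
      simpa [← mul_assoc, Units.inv_mul_cancel_left] using this
    rw [h2, Units.inv_mul_cancel_right]
  -- description of `b` via gBeta
  have hbg : ∀ t : T2 K H,
      mul2 K H (TensorProduct.map LinearMap.id S t * (β ⊗ₜ[K] (1 : H)))
        = gBeta K H S β t := by
    intro t
    induction t using TensorProduct.induction_on with
    | zero => simp
    | tmul x y =>
        simp [gBeta, mul2, Algebra.TensorProduct.tmul_mul_tmul, mul_assoc]
    | add s t hs ht => simp [add_mul, map_add, hs, ht]
  have hb' : b = gBeta K H S β (R : T2 K H) := by
    rw [hbdef, twistBeta, hbg]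
  -- multiplicativity of gBeta
  have gmul : ∀ (x y : H) (t : T2 K H),
      gBeta K H S β ((x ⊗ₜ[K] y) * t) = x * gBeta K H S β t * S y := by
    intro x y t
    induction t using TensorProduct.induction_on with
    | zero => simp
    | tmul p q =>
        simp [gBeta, mul2, Algebra.TensorProduct.tmul_mul_tmul, h.anti_mul, mul_assoc]
    | add s t hs ht => simp [mul_add, map_add, hs, ht, add_mul]
  -- key identity for part 1
  have key1 : ∀ t : T2 K H,
      S (mul2 K H (TensorProduct.map LinearMap.id S
            ((Algebra.TensorProduct.comm K H H) t) * (β ⊗ₜ[K] (1 : H))))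
        = (u : H) * gBeta K H S β (t * (R : T2 K H)) := by
    intro t
    induction t using TensorProduct.induction_on with
    | zero => simp
    | tmul x y =>
        rw [gmul, ← hb']
        simp only [Algebra.TensorProduct.comm_tmul, TensorProduct.map_tmul,
          LinearMap.id_coe, id_eq, Algebra.TensorProduct.tmul_mul_tmul, mul_one,
          mul2, LinearMap.mul'_apply]
        rw [h.anti_mul, h.anti_mul, hSS, ← hub]
        simp [mul_assoc, Units.inv_mul_cancel_left]
    | add s t hs ht => simp [add_mul, map_add, mul_add, hs, ht]
  have part1 : S (twistBeta K H S β ((unitComm K H R)⁻¹)) = (u : H) * β := by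
    have hcoe : ((((unitComm K H R)⁻¹ : (T2 K H)ˣ)) : T2 K H)
        = (Algebra.TensorProduct.comm K H H) ((R⁻¹ : (T2 K H)ˣ) : T2 K H) := rfl
    have := key1 ((R⁻¹ : (T2 K H)ˣ) : T2 K H)
    rw [hRR] at this
    rw [twistBeta, hcoe, this, Algebra.TensorProduct.one_def]
    simp [gBeta, mul2, h.map_one]
  have hfin1 : S (S (u : H) * S β) = (u : H) * β := by
    rw [h.anti_mul, hSSu, hSS]
    exact Units.inv_mul_cancel_right _ _
  -- key identity for part 2
  have gamul : ∀ (x y : H) (t : T2 K H),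
      mul2 K H (TensorProduct.map S LinearMap.id (t * (x ⊗ₜ[K] y)) * (α ⊗ₜ[K] (1 : H)))
        = S x * mul2 K H (TensorProduct.map S LinearMap.id t * (α ⊗ₜ[K] (1 : H))) * y := by
    intro x y t
    induction t using TensorProduct.induction_on with
    | zero => simp
    | tmul p q =>
        simp [mul2, Algebra.TensorProduct.tmul_mul_tmul, h.anti_mul, mul_assoc]
    | add s t hs ht => simp [mul_add, map_add, hs, ht, add_mul]
  have key2 : ∀ t : T2 K H,
      S (mul2 K H (TensorProduct.map S LinearMap.id
            ((Algebra.TensorProduct.comm K H H) t) * (α ⊗ₜ[K] (1 : H))))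
        = mul2 K H (TensorProduct.map S LinearMap.id
            (((R⁻¹ : (T2 K H)ˣ) : T2 K H) * t) * (α ⊗ₜ[K] (1 : H)))
            * ((u⁻¹ : Hˣ) : H) := by
    intro t
    induction t using TensorProduct.induction_on with
    | zero => simp
    | tmul x y =>
        rw [gamul]
        have haRiv : mul2 K H (TensorProduct.map S LinearMap.id
            (((R⁻¹ : (T2 K H)ˣ) : T2 K H)) * (α ⊗ₜ[K] (1 : H))) = a' := rfl
        rw [haRiv]
        simp only [Algebra.TensorProduct.comm_tmul, TensorProduct.map_tmul,
          LinearMap.id_coe, id_eq, Algebra.TensorProduct.tmul_mul_tmul, mul_one,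
          mul2, LinearMap.mul'_apply]
        rw [h.anti_mul, h.anti_mul, hSS, ← hau]
        simp [mul_assoc, Units.mul_inv_cancel_left]
    | add s t hs ht => simp [add_mul, map_add, mul_add, hs, ht]
  have part2 : S (twistAlpha K H S α ((unitComm K H R)⁻¹)) = α * ((u⁻¹ : Hˣ) : H) := by
    have hcoe : (((((unitComm K H R)⁻¹)⁻¹ : (T2 K H)ˣ)) : T2 K H)
        = (Algebra.TensorProduct.comm K H H) ((R : (T2 K H)ˣ) : T2 K H) := rfl
    have := key2 ((R : (T2 K H)ˣ) : T2 K H)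
    rw [hRR] at this
    rw [twistAlpha, hcoe, this, Algebra.TensorProduct.one_def]
    simp [mul2, h.map_one]
  have hfin2 : S (S α * S ((u⁻¹ : Hˣ) : H)) = α * ((u⁻¹ : Hˣ) : H) := by
    rw [h.anti_mul, hSSui, hSS]
    simp [mul_assoc, Units.inv_mul_cancel_left]
  constructor
  · rw [← hS1 (twistBeta K H S β ((unitComm K H R)⁻¹)), part1, ← hfin1, hS1]
  · rw [← hS1 (twistAlpha K H S α ((unitComm K H R)⁻¹)), part2, ← hfin2, hS1]


end QHA
end
end

section
/- Let $H$ be a quasi-triangular quasi-Hopf algebra, $u$ the Drinfeld–Reshetikhin operator associated to $\mathcal R$ and $\tilde u$ the Altschuler–Coste operator associated to $\tilde{\mathcal R} = (\mathcal R^T)^{-1}$ (each the unique invertible element implementing $S^2$ and relating the corresponding twisted and opposite quasi-antipodes). Then $\tilde u = S(u^{-1})$. -/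
open TensorProduct

noncomputable section

namespace QHA

/-- auxiliary map `v ↦ (S ⊗ 1)(v) ·(α ⊗ 1)` followed by multiplication,
i.e. on pure tensors `x ⊗ y ↦ S(x) α y`. -/
def Laux (K : Type*) [Field K] (H : Type*) [Ring H] [Algebra K H]
    (S : H →ₗ[K] H) (α : H) : T2 K H →ₗ[K] H :=
  mul2 K H ∘ₗ LinearMap.mulRight K (α ⊗ₜ[K] (1 : H)) ∘ₗ
    TensorProduct.map S LinearMap.id

lemma Laux_tmul {K : Type*} [Field K] {H : Type*} [Ring H] [Algebra K H]
    (S : H →ₗ[K] H) (α : H) (x y : H) :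
    Laux K H S α (x ⊗ₜ[K] y) = S x * α * y := by
  simp [Laux, mul2, LinearMap.mulRight_apply, Algebra.TensorProduct.tmul_mul_tmul,
    LinearMap.mul'_apply]

lemma twistAlpha_eq_Laux {K : Type*} [Field K] {H : Type*} [Ring H] [Algebra K H]
    (S : H →ₗ[K] H) (α : H) (F : (T2 K H)ˣ) :
    twistAlpha K H S α F = Laux K H S α ((F⁻¹ : (T2 K H)ˣ) : T2 K H) := by
  simp [twistAlpha, Laux, LinearMap.mulRight_apply, mul2]

/-- the Altschuler–Coste operator `ũ` (associated with
`R̃ = (Rᵀ)⁻¹`) is related to the Drinfeld–Reshetikhin operator by `ũ = S(u⁻¹)`. -/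
theorem stmt16 {K : Type*} [Field K] {H : Type*} [Ring H] [Algebra K H]
    (qb : QuasiBialgebra K H) (S Sinv : H →ₗ[K] H) (α β : H)
    (h : IsQuasiAntipode K H qb S α β)
    (hS1 : ∀ a : H, Sinv (S a) = a) (hS2 : ∀ a : H, S (Sinv a) = a)
    (R : (T2 K H)ˣ) (hR : IsRMatrix K H qb R)
    (u ut : Hˣ) (hu : uProp K H S Sinv α β R u)
    (hut : uProp K H S Sinv α β ((unitComm K H R)⁻¹) ut) :
    (ut : H) = S ((u⁻¹ : Hˣ) : H) := by
  obtain ⟨hu1, hu2, -⟩ := hu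
  obtain ⟨hut1, hut2, -⟩ := hut
  -- basic antipode facts
  have sinv_mul : ∀ x y : H, Sinv (x * y) = Sinv y * Sinv x := by
    intro x y
    have hxy : S (Sinv y * Sinv x) = x * y := by
      rw [h.anti_mul, hS2, hS2]
    calc Sinv (x * y) = Sinv (S (Sinv y * Sinv x)) := by rw [hxy]
      _ = Sinv y * Sinv x := hS1 _
  have sinv_one : Sinv (1 : H) = 1 := by
    calc Sinv (1 : H) = Sinv (S 1) := by rw [h.map_one]
      _ = 1 := hS1 _
  have hconj_u : ∀ a : H, S (S a) * (u : H) = (u : H) * a := by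
    intro a
    rw [hu1, mul_assoc ((u : H) * a), Units.inv_mul, mul_one]
  have hconj_ut : ∀ a : H, S (S a) * (ut : H) = (ut : H) * a := by
    intro a
    rw [hut1, mul_assoc ((ut : H) * a), Units.inv_mul, mul_one]
  have hSau : ∀ a : H, S a * (u : H) = (u : H) * Sinv a := by
    intro a
    have := hconj_u (Sinv a)
    rwa [hS2] at this
  have hS2u : S (S (u : H)) = (u : H) := by
    rw [hu1, mul_assoc, Units.mul_inv, mul_one]
  have hSinvu : Sinv (u : H) = S (u : H) := by
    conv_lhs => rw [← hS2u]
    exact hS1 _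
  set z : H := S (u : H) * (ut : H) with hzdef
  -- z is central
  have hzc : ∀ a : H, z * a = a * z := by
    intro a
    calc z * a = S (u : H) * ((ut : H) * a) := by rw [hzdef, mul_assoc]
      _ = S (u : H) * (S (S a) * (ut : H)) := by rw [hconj_ut]
      _ = (S (u : H) * S (S a)) * (ut : H) := by rw [mul_assoc]
      _ = S (S a * (u : H)) * (ut : H) := by rw [h.anti_mul]
      _ = S ((u : H) * Sinv a) * (ut : H) := by rw [hSau]
      _ = (S (Sinv a) * S (u : H)) * (ut : H) := by rw [h.anti_mul]
      _ = a * z := by rw [hS2, hzdef, mul_assoc]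
  -- the multiplicativity lemma for Laux
  have lemB : ∀ (v : T2 K H) (x y : H),
      S x * Laux K H S α v * y = Laux K H S α (v * (x ⊗ₜ[K] y)) := by
    intro v x y
    induction v using TensorProduct.induction_on with
    | zero => simp
    | tmul a b =>
      rw [Laux_tmul, Algebra.TensorProduct.tmul_mul_tmul, Laux_tmul, h.anti_mul]
      simp only [mul_assoc]
    | add p q hp hq =>
      simp only [map_add, mul_add, add_mul, hp, hq]
  -- key computation: S(Laux (comm w)) * u = Laux (R⁻¹ * w)
  have lemA : ∀ w : T2 K H,
      S (Laux K H S α ((Algebra.TensorProduct.comm K H H) w)) * (u : H) =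
        Laux K H S α (((R⁻¹ : (T2 K H)ˣ) : T2 K H) * w) := by
    intro w
    induction w using TensorProduct.induction_on with
    | zero => simp
    | tmul x y =>
      rw [Algebra.TensorProduct.comm_tmul, Laux_tmul, h.anti_mul, h.anti_mul,
        mul_assoc, mul_assoc, hconj_u, ← mul_assoc (S α), hSau,
        hu2.trans (twistAlpha_eq_Laux S α R), ← mul_assoc]
      exact lemB _ x y
    | add p q hp hq =>
      rw [map_add, map_add, map_add, add_mul, mul_add, map_add, hp, hq]
  have hXα : S (Laux K H S α ((Algebra.TensorProduct.comm K H H) ((R : T2 K H)))) * (u : H)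
      = α := by
    rw [lemA, Units.inv_mul, Algebra.TensorProduct.one_def, Laux_tmul, h.map_one,
      one_mul, mul_one]
  -- z fixes Sinv α
  have hXe : S (u : H) * Laux K H S α ((Algebra.TensorProduct.comm K H H) ((R : T2 K H)))
      = Sinv α := by
    have h1 := congrArg Sinv hXα
    rwa [sinv_mul, hSinvu, hS1] at h1
  have ht : twistAlpha K H S α ((unitComm K H R)⁻¹) =
      Laux K H S α ((Algebra.TensorProduct.comm K H H) ((R : T2 K H))) := by
    rw [twistAlpha_eq_Laux, inv_inv]
    rfl
  have hzA : z * Sinv α = Sinv α := by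
    calc z * Sinv α = S (u : H) * ((ut : H) * Sinv α) := by rw [hzdef, mul_assoc]
      _ = S (u : H) * Laux K H S α ((Algebra.TensorProduct.comm K H H) ((R : T2 K H))) := by
          rw [hut2, ht]
      _ = Sinv α := hXe
  have hmove : ∀ x w : H, z * (x * (Sinv α * w)) = x * (Sinv α * w) := by
    intro x w
    rw [← mul_assoc z x (Sinv α * w), hzc x, mul_assoc x z (Sinv α * w),
      ← mul_assoc z (Sinv α) w, hzA]
  -- z fixes the image of Sinv ∘ mixPhi
  have hzP : ∀ t : T3 K H,
      z * Sinv (mixPhi K H S S α β t) = Sinv (mixPhi K H S S α β t) := by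
    intro t
    induction t using TensorProduct.induction_on with
    | zero => simp
    | tmul a s =>
      induction s using TensorProduct.induction_on with
      | zero => simp
      | tmul b c =>
        have hmP : mixPhi K H S S α β (a ⊗ₜ[K] (b ⊗ₜ[K] c)) =
            S a * ((α * b) * (β * S c)) := by
          simp [mixPhi, mul2, LinearMap.mul'_apply]
        rw [hmP, sinv_mul, sinv_mul, sinv_mul, sinv_mul, hS1, hS1,
          ← mul_assoc (c * Sinv β) (Sinv b) (Sinv α),
          mul_assoc (c * Sinv β * Sinv b) (Sinv α) a]
        exact hmove _ a
      | add s1 s2 ih1 ih2 =>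
        rw [TensorProduct.tmul_add, map_add, map_add, mul_add, ih1, ih2]
    | add t1 t2 ih1 ih2 =>
      rw [map_add, map_add, mul_add, ih1, ih2]
  -- conclude z = 1
  have hz1 : z = 1 := by
    have h2 := hzP ((qb.Φ : T3 K H))
    rw [h.phi, sinv_one, mul_one] at h2
    exact h2
  -- finish
  have h3 : S ((u⁻¹ : Hˣ) : H) * S (u : H) = 1 := by
    rw [← h.anti_mul, Units.mul_inv, h.map_one]
  calc (ut : H) = 1 * (ut : H) := (one_mul _).symm
    _ = (S ((u⁻¹ : Hˣ) : H) * S (u : H)) * (ut : H) := by rw [h3]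
    _ = S ((u⁻¹ : Hˣ) : H) * (S (u : H) * (ut : H)) := by rw [mul_assoc]
    _ = S ((u⁻¹ : Hˣ) : H) := by rw [← hzdef, hz1, mul_one]

end QHA
end
end
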